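/- arXiv:1604.03787 — 2 statements merged into one kernel-verified Lean document; each statement's English description precedes it below -/
import Mathlib

section
/- For every integer n ≥ 0, every integer k, every positive integer s, every real u with u ≠ 1, and every real x: E_{n,p,q}^{(k)}(x) = (1/(1−u)^s) · Σ_{l=0}^{n} binom(n,l) · Σ_{i=0}^{s} binom(s,i) · (−u)^{s−i} · H_l^{(s)}(x;u) · E_{n−l,p,q}^{(k)}(i). -/
open Finset

/-- The `(p,q)`-integer `[m]_{p,q} = (p^m - q^m)/(p - q)`. -/
noncomputable def pqInt (p q : ℝ) (m : ℕ) : ℝ := (p ^ m - q ^ m) / (p - q)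

/-- The exponential generating function `∑ f n * t^n / n!` of a sequence `f`. -/
noncomputable def egf (f : ℕ → ℝ) : PowerSeries ℝ :=
  PowerSeries.mk fun n => f n / n.factorial

/-- Formal substitution of a power series `S` with zero constant term into the
`(p,q)`-polylogarithm `Li_{k,p,q}(s) = ∑_{m ≥ 1} s^m / [m]_{p,q}^k`.
(For `m > n` the series `S^m` has zero `n`-th coefficient, so the sum is finite.) -/
noncomputable def pqLi (p q : ℝ) (k : ℤ) (S : PowerSeries ℝ) : PowerSeries ℝ :=
  PowerSeries.mk fun n =>
    ∑ m ∈ Finset.Icc 1 n, PowerSeries.coeff n (S ^ m) / pqInt p q m ^ k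

/-!
Multiply the generating function of `E_n(x)` by `(1 - u)^s`: the Frobenius–Euler relation turns
`(1 - u)^s e^{xt}` into `(e^t - u)^s` times the generating function of `H_l(x)`, and after the
binomial expansion `(e^t - u)^s = ∑ binom(s,i) (-u)^{s-i} e^{it}` each `e^{it}` recombines with the
polylogarithm factor into the generating function of `E_n(i)`. Comparing coefficients of a product
of exponential generating functions gives the binomial convolution over `l`.
-/

open PowerSeries

theorem exp_sub_C_pow_eq_sum {A : Type*} [CommRing A] [Algebra ℚ A] (u : A) (s : ℕ) :
    (exp A - C u) ^ s =
      ∑ i ∈ range (s + 1), C ((s.choose i : A) * (-u) ^ (s - i)) * rescale (i : A) (exp A) := by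
  rw [sub_eq_add_neg, add_pow]
  refine sum_congr rfl fun i _ => ?_
  rw [← exp_pow_eq_rescale_exp, ← map_neg, ← map_pow, map_mul, ← map_natCast C]
  ring

theorem C_mul_eq_mul_sum_of_mul_rescale_exp {R : Type*} [CommRing R] [IsDomain R] [Algebra ℚ R]
    {F G h : R⟦X⟧} {e : R → R⟦X⟧} (hG : G ≠ 0)
    (he : ∀ x, F * rescale x (exp R) = G * e x) {a u x : R} {s : ℕ}
    (hh : C a * rescale x (exp R) = (exp R - C u) ^ s * h) :
    C a * e x = h * ∑ i ∈ range (s + 1), C ((s.choose i : R) * (-u) ^ (s - i)) * e i := by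
  refine mul_left_cancel₀ hG ?_
  calc G * (C a * e x) = F * (C a * rescale x (exp R)) := by rw [← mul_left_comm, ← he]; ring
    _ = h * ∑ i ∈ range (s + 1), C ((s.choose i : R) * (-u) ^ (s - i)) *
          (F * rescale (i : R) (exp R)) := by
      rw [hh, exp_sub_C_pow_eq_sum, sum_mul, mul_sum, mul_sum]
      exact sum_congr rfl fun i _ => by ring
    _ = G * (h * ∑ i ∈ range (s + 1), C ((s.choose i : R) * (-u) ^ (s - i)) * e i) := by
      simp only [he, mul_sum]
      exact sum_congr rfl fun i _ => by ring

theorem C_mul_egf (a : ℝ) (f : ℕ → ℝ) : C a * egf f = egf fun n => a * f n := by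
  ext n
  simp [egf, mul_div_assoc]

theorem egf_sum {ι : Type*} (t : Finset ι) (f : ι → ℕ → ℝ) :
    (egf fun n => ∑ i ∈ t, f i n) = ∑ i ∈ t, egf (f i) := by
  ext n
  simp [egf, sum_div]

theorem egf_mul_egf (f g : ℕ → ℝ) :
    egf f * egf g = egf fun n => ∑ l ∈ range (n + 1), (n.choose l : ℝ) * f l * g (n - l) := by
  ext n
  simp only [egf, coeff_mul, coeff_mk, Nat.sum_antidiagonal_eq_sum_range_succ_mk, sum_div]
  refine sum_congr rfl fun l hl => ?_
  rw [Nat.cast_choose ℝ (Nat.lt_succ_iff.mp (mem_range.mp hl))]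
  field_simp

theorem egf_injective : Function.Injective egf := fun f g hfg => funext fun n => by
  have hn := congrArg (coeff n) hfg
  simp only [egf, coeff_mk] at hn
  exact (div_left_inj' (Nat.cast_ne_zero.mpr n.factorial_ne_zero)).mp hn

theorem pqPolyEuler_eq_sum_frobenius_euler_general
    (p q : ℝ) (k : ℤ)
    (E : ℝ → ℕ → ℝ)
    (hE : ∀ x : ℝ,
      2 * pqLi p q k (1 - PowerSeries.rescale (-1) (PowerSeries.exp ℝ)) *
          PowerSeries.rescale x (PowerSeries.exp ℝ) =
        (1 + PowerSeries.exp ℝ) * egf (E x))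
    (s : ℕ) (u : ℝ) (hu : u ≠ 1)
    (H : ℝ → ℕ → ℝ)
    (hH : ∀ x : ℝ,
      PowerSeries.C ((1 - u) ^ s) * PowerSeries.rescale x (PowerSeries.exp ℝ) =
        (PowerSeries.exp ℝ - PowerSeries.C u) ^ s * egf (H x)) :
    ∀ (n : ℕ) (x : ℝ),
      E x n =
        (1 / (1 - u) ^ s) *
          ∑ l ∈ Finset.range (n + 1), (n.choose l : ℝ) *
            ∑ i ∈ Finset.range (s + 1),
              (s.choose i : ℝ) * (-u) ^ (s - i) * H x l * E (i : ℝ) (n - l) := by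
  intro n x
  have hG : (1 + exp ℝ : ℝ⟦X⟧) ≠ 0 := fun h => by simpa using congrArg constantCoeff h
  have key := C_mul_eq_mul_sum_of_mul_rescale_exp hG hE (hH x)
  simp only [C_mul_egf, ← egf_sum, egf_mul_egf] at key
  have hcoeff := congrFun (egf_injective key) n
  have hu' : (1 - u) ^ s ≠ 0 := pow_ne_zero _ (sub_ne_zero.mpr hu.symm)
  rw [one_div, eq_inv_mul_iff_mul_eq₀ hu', hcoeff]
  refine sum_congr rfl fun l _ => ?_
  rw [mul_assoc, mul_sum]
  exact congrArg _ (sum_congr rfl fun i _ => by ring)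

theorem pqPolyEuler_eq_sum_frobenius_euler
    (p q : ℝ) (hq : 0 < q) (hqp : q < p) (hp : p ≤ 1) (k : ℤ)
    (E : ℝ → ℕ → ℝ)
    (hE : ∀ x : ℝ,
      2 * pqLi p q k (1 - PowerSeries.rescale (-1) (PowerSeries.exp ℝ)) *
          PowerSeries.rescale x (PowerSeries.exp ℝ) =
        (1 + PowerSeries.exp ℝ) * egf (E x))
    (s : ℕ) (hs : 1 ≤ s) (u : ℝ) (hu : u ≠ 1)
    (H : ℝ → ℕ → ℝ)
    (hH : ∀ x : ℝ,
      PowerSeries.C ((1 - u) ^ s) * PowerSeries.rescale x (PowerSeries.exp ℝ) =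
        (PowerSeries.exp ℝ - PowerSeries.C u) ^ s * egf (H x)) :
    ∀ (n : ℕ) (x : ℝ),
      E x n =
        (1 / (1 - u) ^ s) *
          ∑ l ∈ Finset.range (n + 1), (n.choose l : ℝ) *
            ∑ i ∈ Finset.range (s + 1),
              (s.choose i : ℝ) * (-u) ^ (s - i) * H x l * E (i : ℝ) (n - l) :=
  pqPolyEuler_eq_sum_frobenius_euler_general p q k E hE s u hu H hH
end

section
/- For every integer k ≥ 1, every integer n ≥ 1, and every real x, the k-fold iterated (p,q)-integral ∫_0^1 ⋯ ∫_0^1 (x − t_1·t_2·⋯·t_k)_n d_{p,q}t_1 ⋯ d_{p,q}t_k equals (−1)^n · Σ_{m=0}^{n} S_1(n,m) · Σ_{l=0}^{m} binom(m,l) · (−x)^l / [m−l+1]_{p,q}^k, and this in turn equals (−1)^n · Σ_{m=0}^{n} S_1(n,m,−x) / [m+1]_{p,q}^k. -/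
/-!
Up to the sign `(-1)^n`, the integrand `(x - y)_n` is the rising factorial of `y - x`, that is
`∑ₘ S₁(n,m) (y - x)^m`; expanding `(y - x)^m` binomially turns it into an explicit polynomial in
`y = t₁ ⋯ t_k`. On a monomial the `(p,q)`-integral is a geometric series, `∫₀¹ t^e d_{p,q}t = 1/[e+1]`,
so the iterated integral sends `y^e` to `1/[e+1]^k`, which gives the first formula. The second is
the same double sum reindexed by `j = m - l`.
-/

open Finset

/-- The unsigned Stirling numbers of the first kind, defined by the recurrence
`S1(n+1, m+1) = n * S1(n, m+1) + S1(n, m)`, so that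
`x(x+1)⋯(x+n-1) = ∑_{m=0}^{n} S1(n,m) x^m`. -/
def stirling1 : ℕ → ℕ → ℕ
  | 0, 0 => 1
  | 0, _ + 1 => 0
  | _ + 1, 0 => 0
  | n + 1, m + 1 => n * stirling1 n (m + 1) + stirling1 n m

/-- The `(p,q)`-integral `∫_0^1 f(t) d_{p,q}t` for `0 < q < p ≤ 1`. -/
noncomputable def pqIntegral (p q : ℝ) (f : ℝ → ℝ) : ℝ :=
  (p - q) * ∑' n : ℕ, (q ^ n / p ^ (n + 1)) * f (q ^ n / p ^ (n + 1))

/-- The `k`-fold iterated `(p,q)`-integral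
`∫_0^1 ⋯ ∫_0^1 g(t₁ ⋯ t_k) d_{p,q}t₁ ⋯ d_{p,q}t_k`,
taken one variable at a time. -/
noncomputable def iterPqIntegral (p q : ℝ) : ℕ → (ℝ → ℝ) → ℝ
  | 0, g => g 1
  | k + 1, g => pqIntegral p q fun t => iterPqIntegral p q k fun s => g (t * s)

/-- Carlitz's weighted Stirling numbers of the first kind,
`S1(n,m,x) = ∑_{i=0}^{n-m} binom(m+i,i) S1(n,m+i) x^i`. -/
noncomputable def stirling1W (n m : ℕ) (x : ℝ) : ℝ :=
  ∑ i ∈ Finset.range (n - m + 1), ((m + i).choose i : ℝ) * (stirling1 n (m + i) : ℝ) * x ^ i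

section pqIntegral

variable {p q : ℝ}

lemma hasSum_pqIntegral_node_pow (hqp : |q| < p) (e : ℕ) :
    HasSum (fun j : ℕ => (q ^ j / p ^ (j + 1)) ^ (e + 1))
      ((p - q)⁻¹ * (pqInt p q (e + 1))⁻¹) := by
  have hp : 0 < p := (abs_nonneg q).trans_lt hqp
  have hratio : |(q / p) ^ (e + 1)| < 1 := by
    rw [abs_pow, abs_div, abs_of_pos hp]
    exact pow_lt_one₀ (by positivity) ((div_lt_one hp).2 hqp) e.succ_ne_zero
  have hterm : (fun j : ℕ => (q ^ j / p ^ (j + 1)) ^ (e + 1))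
      = fun j => (p ^ (e + 1))⁻¹ * ((q / p) ^ (e + 1)) ^ j := by
    funext j
    rw [pow_succ p, ← div_div, ← div_pow, div_eq_mul_inv _ p, mul_pow, ← pow_mul, ← pow_mul,
      mul_comm j, inv_pow, mul_comm]
  have hvalue : (p - q)⁻¹ * (pqInt p q (e + 1))⁻¹
      = (p ^ (e + 1))⁻¹ * (1 - (q / p) ^ (e + 1))⁻¹ := by
    have hpq : p - q ≠ 0 := sub_ne_zero.2 ((le_abs_self q).trans_lt hqp).ne'
    rw [pqInt, div_pow, one_sub_div (pow_ne_zero _ hp.ne'), inv_div, inv_div, div_eq_mul_inv,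
      div_eq_mul_inv, inv_mul_cancel_left₀ hpq, inv_mul_cancel_left₀ (pow_ne_zero _ hp.ne')]
  rw [hterm, hvalue]
  exact (hasSum_geometric_of_abs_lt_one hratio).mul_left _

lemma pqIntegral_sum_mul_pow (hqp : |q| < p) {ι : Type*} (s : Finset ι) (c : ι → ℝ)
    (e : ι → ℕ) :
    pqIntegral p q (fun t => ∑ a ∈ s, c a * t ^ e a) = ∑ a ∈ s, c a / pqInt p q (e a + 1) := by
  have hpq : p - q ≠ 0 := sub_ne_zero.2 ((le_abs_self q).trans_lt hqp).ne'
  have hsum : HasSum (fun j : ℕ => q ^ j / p ^ (j + 1) * ∑ a ∈ s, c a * (q ^ j / p ^ (j + 1)) ^ e a)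
      (∑ a ∈ s, c a * ((p - q)⁻¹ * (pqInt p q (e a + 1))⁻¹)) := by
    simp only [mul_sum, mul_left_comm _ (c _), ← pow_succ']
    exact hasSum_sum fun a _ => (hasSum_pqIntegral_node_pow hqp (e a)).mul_left (c a)
  rw [pqIntegral, hsum.tsum_eq, mul_sum]
  exact sum_congr rfl fun a _ => by field_simp

lemma iterPqIntegral_sum_mul_pow (hqp : |q| < p) {ι : Type*} (s : Finset ι) (c : ι → ℝ)
    (e : ι → ℕ) (k : ℕ) :
    iterPqIntegral p q k (fun t => ∑ a ∈ s, c a * t ^ e a)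
      = ∑ a ∈ s, c a / pqInt p q (e a + 1) ^ k := by
  induction k generalizing c with
  | zero => simp [iterPqIntegral]
  | succ k ih =>
    have hinner (t : ℝ) : iterPqIntegral p q k (fun u => ∑ a ∈ s, c a * (t * u) ^ e a)
        = ∑ a ∈ s, c a / pqInt p q (e a + 1) ^ k * t ^ e a := by
      simp only [mul_pow, ← mul_assoc]
      rw [ih]
      exact sum_congr rfl fun a _ => by ring
    simp only [iterPqIntegral, hinner, pqIntegral_sum_mul_pow hqp, pow_succ, div_div]

end pqIntegral

lemma stirling1_eq_stirlingFirst : stirling1 = Nat.stirlingFirst := by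
  funext n m
  induction n generalizing m with
  | zero => cases m <;> rfl
  | succ n ih =>
    cases m with
    | zero => rfl
    | succ m => rw [stirling1, Nat.stirlingFirst_succ_succ, ih, ih]

lemma prod_range_add_natCast_eq_sum_stirlingFirst {R : Type*} [CommSemiring R] (n : ℕ) (z : R) :
    ∏ i ∈ range n, (z + i) = ∑ m ∈ range (n + 1), (Nat.stirlingFirst n m : R) * z ^ m := by
  induction n with
  | zero => simp
  | succ n ih =>
    set A := ∑ m ∈ range (n + 1), (Nat.stirlingFirst n m : R) * z ^ m
    set B := ∑ m ∈ range (n + 1), (Nat.stirlingFirst n (m + 1) : R) * z ^ (m + 1)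
    have hshift : B + Nat.stirlingFirst n 0 = A := by
      have h := sum_range_succ' (fun m => (Nat.stirlingFirst n m : R) * z ^ m) (n + 1)
      rw [sum_range_succ, Nat.stirlingFirst_eq_zero_of_lt n.lt_succ_self] at h
      simpa [A, B] using h.symm
    have hcorner : (n : R) * Nat.stirlingFirst n 0 = 0 := by
      cases n <;> simp
    calc ∏ i ∈ range (n + 1), (z + i) = A * z + n * (B + Nat.stirlingFirst n 0) := by
          rw [prod_range_succ, ih, hshift]; ring
      _ = n * B + A * z := by rw [mul_add, hcorner]; ring
      _ = ∑ m ∈ range (n + 2), (Nat.stirlingFirst (n + 1) m : R) * z ^ m := by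
          simp only [sum_range_succ' _ (n + 1), Nat.stirlingFirst_succ_succ,
            Nat.stirlingFirst_succ_zero, Nat.cast_add, Nat.cast_mul, Nat.cast_zero, zero_mul,
            add_zero, add_mul, sum_add_distrib, mul_assoc, ← mul_sum, A, B, sum_mul, pow_succ]

lemma prod_range_sub_sub_natCast_eq_sum_stirling1 {R : Type*} [CommRing R] (n : ℕ) (x y : R) :
    ∏ i ∈ range n, (x - y - i) = ∑ m ∈ range (n + 1), ∑ l ∈ range (m + 1),
      (-1) ^ n * stirling1 n m * m.choose l * (-x) ^ l * y ^ (m - l) := by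
  calc ∏ i ∈ range n, (x - y - i) = ∏ i ∈ range n, -((-x + y) + i) :=
        prod_congr rfl fun i _ => by ring
    _ = (-1) ^ n * ∏ i ∈ range n, ((-x + y) + i) := by rw [prod_neg, card_range]
    _ = (-1) ^ n * ∑ m ∈ range (n + 1), (stirling1 n m : R) * (-x + y) ^ m := by
        rw [prod_range_add_natCast_eq_sum_stirlingFirst, stirling1_eq_stirlingFirst]
    _ = _ := by
        simp only [add_pow, mul_sum]
        exact sum_congr rfl fun m _ => sum_congr rfl fun l _ => by ring

lemma sum_range_mul_sum_choose_eq_sum_range_sum_choose_mul {R : Type*} [CommSemiring R] (n : ℕ)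
    (a F : ℕ → R) (x : R) :
    ∑ m ∈ range (n + 1), a m * ∑ l ∈ range (m + 1), (m.choose l : R) * x ^ l * F (m - l)
      = ∑ j ∈ range (n + 1),
          (∑ i ∈ range (n - j + 1), ((j + i).choose i : R) * a (j + i) * x ^ i) * F j := by
  calc _ = ∑ m ∈ Ico 0 (n + 1), ∑ j ∈ Ico 0 (m + 1),
        a m * ((m.choose (m - j) : R) * x ^ (m - j) * F j) := by
        rw [← range_eq_Ico]
        refine sum_congr rfl fun m _ => ?_
        rw [mul_sum, ← range_eq_Ico, ← sum_range_reflect]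
        refine sum_congr rfl fun j hj => ?_
        rw [mem_range] at hj
        rw [show m + 1 - 1 - j = m - j by omega, Nat.sub_sub_self (by omega : j ≤ m)]
    _ = ∑ j ∈ Ico 0 (n + 1), ∑ m ∈ Ico j (n + 1),
        a m * ((m.choose (m - j) : R) * x ^ (m - j) * F j) := (sum_Ico_Ico_comm _ _ _).symm
    _ = _ := by
        rw [← range_eq_Ico]
        refine sum_congr rfl fun j hj => ?_
        rw [mem_range] at hj
        rw [sum_Ico_eq_sum_range, sum_mul, show n + 1 - j = n - j + 1 by omega]
        refine sum_congr rfl fun i _ => ?_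
        rw [Nat.add_sub_cancel_left]
        ring

theorem pqPolyCauchy_second_kind_eq_sum_stirling1_general
    (p q : ℝ) (hq : 0 < q) (hqp : q < p)
    (k : ℕ) (n : ℕ) (x : ℝ) :
    iterPqIntegral p q k (fun y => ∏ i ∈ Finset.range n, (x - y - (i : ℝ))) =
        (-1 : ℝ) ^ n *
          ∑ m ∈ Finset.range (n + 1),
            (stirling1 n m : ℝ) *
              ∑ l ∈ Finset.range (m + 1),
                (m.choose l : ℝ) * (-x) ^ l / pqInt p q (m - l + 1) ^ (k : ℤ) ∧
      iterPqIntegral p q k (fun y => ∏ i ∈ Finset.range n, (x - y - (i : ℝ))) =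
        (-1 : ℝ) ^ n *
          ∑ m ∈ Finset.range (n + 1),
            stirling1W n m (-x) / pqInt p q (m + 1) ^ (k : ℤ) := by
  have habs : |q| < p := by rwa [abs_of_pos hq]
  have hfirst : iterPqIntegral p q k (fun y => ∏ i ∈ Finset.range n, (x - y - (i : ℝ))) =
      (-1 : ℝ) ^ n * ∑ m ∈ range (n + 1), (stirling1 n m : ℝ) *
        ∑ l ∈ range (m + 1), (m.choose l : ℝ) * (-x) ^ l / pqInt p q (m - l + 1) ^ (k : ℤ) := by
    -- flatten the double sum into one over pairs `(m, l)` to integrate it monomial by monomial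
    simp only [prod_range_sub_sub_natCast_eq_sum_stirling1, sum_sigma']
    rw [iterPqIntegral_sum_mul_pow habs]
    simp only [zpow_natCast, mul_sum, sum_sigma']
    exact sum_congr rfl fun _ _ => by ring
  refine ⟨hfirst, hfirst.trans ?_⟩
  simp only [div_eq_mul_inv]
  exact congrArg _ (sum_range_mul_sum_choose_eq_sum_range_sum_choose_mul n _
    (fun j => (pqInt p q (j + 1) ^ (k : ℤ))⁻¹) (-x))

theorem pqPolyCauchy_second_kind_eq_sum_stirling1
    (p q : ℝ) (hq : 0 < q) (hqp : q < p) (hp : p ≤ 1)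
    (k : ℕ) (hk : 1 ≤ k) (n : ℕ) (hn : 1 ≤ n) (x : ℝ) :
    iterPqIntegral p q k (fun y => ∏ i ∈ Finset.range n, (x - y - (i : ℝ))) =
        (-1 : ℝ) ^ n *
          ∑ m ∈ Finset.range (n + 1),
            (stirling1 n m : ℝ) *
              ∑ l ∈ Finset.range (m + 1),
                (m.choose l : ℝ) * (-x) ^ l / pqInt p q (m - l + 1) ^ (k : ℤ) ∧
      iterPqIntegral p q k (fun y => ∏ i ∈ Finset.range n, (x - y - (i : ℝ))) =
        (-1 : ℝ) ^ n *
          ∑ m ∈ Finset.range (n + 1),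
            stirling1W n m (-x) / pqInt p q (m + 1) ^ (k : ℤ) :=
  pqPolyCauchy_second_kind_eq_sum_stirling1_general p q hq hqp k n x
end
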